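/- arXiv:1208.5441 — 4 statements merged into one kernel-verified Lean document; each statement's English description precedes it below -/
import Mathlib

section
/- If five mutually tangent spheres in R^3 have curvatures κ1,...,κ5 (with a sphere internally tangent to the others given negative curvature), then 3(κ1²+κ2²+κ3²+κ4²+κ5²) = (κ1+κ2+κ3+κ4+κ5)². -/
/-!
Lift the sphere with centre `c ∈ ℝⁿ` and signed curvature `κ` to its inversive coordinates
`(κ c, κ, κ‖c‖² - 1/κ) ∈ ℝⁿ⁺²` and pair such vectors by the Lorentzian form
`⟪x, y⟫ - (a b' + a' b) / 2`. Every sphere pairs to `1` with itself and tangent spheres pair to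
`-1`, so `n + 2` mutually tangent spheres have the invertible Gram matrix `2I - J`. Their lifts
therefore form a basis, and the form can be recovered from the pairings with the spheres through
the inverse Gram matrix `(I - J/n)/2`. Applied to the isotropic vector `e` of the point at
infinity, whose pairing with each sphere is its curvature, this gives
`0 = ⟨e, e⟩ = (∑ κᵢ² - (∑ κᵢ)² / n) / 2`.
-/

open Matrix

namespace Matrix

variable {R K ι l : Type*}

theorem mul_mul_transpose_apply [NonUnitalSemiring R] [Fintype l] (M : Matrix ι l R)
    (Q : Matrix l l R) (i j : ι) :
    (M * Q * Mᵀ) i j = M i ⬝ᵥ Q *ᵥ M j := by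
  rw [Matrix.mul_assoc]
  simp [mul_apply, dotProduct, mulVec]

theorem dotProduct_mulVec_of_mul_gram_eq_one [CommRing R] [Fintype ι] [DecidableEq ι]
    [Fintype l] [DecidableEq l] (M : Matrix ι l R) (Q : Matrix l l R) (H : Matrix ι ι R)
    (hcard : Fintype.card ι = Fintype.card l) (hH : H * (M * Q * Mᵀ) = 1) (e : l → R) :
    M *ᵥ Q *ᵥ e ⬝ᵥ H *ᵥ M *ᵥ Q *ᵥ e = e ⬝ᵥ Q *ᵥ e := by
  have hinv : Mᵀ * (H * M * Q) = 1 := by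
    rw [← mul_eq_one_comm_of_card_eq _ _ _ hcard]
    simpa only [Matrix.mul_assoc] using hH
  calc M *ᵥ Q *ᵥ e ⬝ᵥ H *ᵥ M *ᵥ Q *ᵥ e = Mᵀ *ᵥ H *ᵥ M *ᵥ Q *ᵥ e ⬝ᵥ Q *ᵥ e := by
        rw [dotProduct_comm, dotProduct_mulVec, ← mulVec_transpose]
    _ = e ⬝ᵥ Q *ᵥ e := by
        simp only [mulVec_mulVec, ← Matrix.mul_assoc] at hinv ⊢
        rw [hinv, one_mulVec]

theorem inv_two_smul_one_sub_allOnes_mul [Field K] [CharZero K] {N : ℕ} (hN : N ≠ 0) :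
    ((2⁻¹ : K) • (1 - (N : K)⁻¹ • of fun _ _ => 1) : Matrix (Fin (N + 2)) (Fin (N + 2)) K) *
      (2 - of fun _ _ => 1) = 1 := by
  have hJ : (of fun _ _ => 1 : Matrix (Fin (N + 2)) (Fin (N + 2)) K) * (of fun _ _ => 1) =
      ((N : K) + 2) • of fun _ _ => 1 := by
    ext; simp [mul_apply]
  simp only [smul_mul, mul_sub, sub_mul, mul_two, hJ, one_mul]
  match_scalars <;> field_simp <;> ring

theorem dotProduct_one_sub_smul_allOnes_mulVec [CommRing R] [Fintype ι] [DecidableEq ι] (a : R)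
    (v : ι → R) :
    v ⬝ᵥ (1 - a • of fun _ _ => 1 : Matrix ι ι R) *ᵥ v = ∑ i, v i ^ 2 - a * (∑ i, v i) ^ 2 := by
  have hJ : (of fun _ _ => 1 : Matrix ι ι R) *ᵥ v = fun _ => ∑ i, v i := by
    ext; simp [mulVec, dotProduct]
  rw [sub_mulVec, one_mulVec, smul_mulVec, hJ, dotProduct_sub, dotProduct_smul]
  simp [dotProduct, sq, Finset.sum_mul]

end Matrix

variable {n : ℕ}

noncomputable def inversiveCoords (c : EuclideanSpace ℝ (Fin n)) (κ : ℝ) : Fin n ⊕ Fin 2 → ℝ :=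
  Sum.elim (κ • c.ofLp) ![κ, κ * ‖c‖ ^ 2 - κ⁻¹]

noncomputable def inversiveForm : Matrix (Fin n ⊕ Fin 2) (Fin n ⊕ Fin 2) ℝ :=
  fromBlocks 1 0 0 !![0, -2⁻¹; -2⁻¹, 0]

def inversiveInfinity : Fin n ⊕ Fin 2 → ℝ :=
  Sum.elim 0 ![0, -2]

noncomputable def inversiveMatrix {ι : Type*} (c : ι → EuclideanSpace ℝ (Fin n)) (κ : ι → ℝ) :
    Matrix ι (Fin n ⊕ Fin 2) ℝ :=
  fun i => inversiveCoords (c i) (κ i)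

theorem inversiveCoords_dotProduct_mulVec (c c' : EuclideanSpace ℝ (Fin n)) (κ κ' : ℝ) :
    inversiveCoords c κ ⬝ᵥ inversiveForm *ᵥ inversiveCoords c' κ' =
      κ * κ' * inner ℝ c c' - (κ * (κ' * ‖c'‖ ^ 2 - κ'⁻¹) + κ' * (κ * ‖c‖ ^ 2 - κ⁻¹)) / 2 := by
  simp only [inversiveCoords, inversiveForm, fromBlocks_mulVec, Sum.elim_comp_inl,
    Sum.elim_comp_inr, one_mulVec, zero_mulVec, add_zero, zero_add, sumElim_dotProduct_sumElim,
    EuclideanSpace.inner_eq_star_dotProduct, star_trivial, dotProduct_smul]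
  simp [dotProduct_comm c'.ofLp, vecHead, vecTail]
  ring

theorem inversiveCoords_dotProduct_mulVec_self {c : EuclideanSpace ℝ (Fin n)} {κ : ℝ}
    (hκ : κ ≠ 0) : inversiveCoords c κ ⬝ᵥ inversiveForm *ᵥ inversiveCoords c κ = 1 := by
  rw [inversiveCoords_dotProduct_mulVec, real_inner_self_eq_norm_sq]
  field_simp
  ring

theorem inversiveCoords_dotProduct_mulVec_of_tangent {c c' : EuclideanSpace ℝ (Fin n)}
    {κ κ' : ℝ} (hκ : κ ≠ 0) (hκ' : κ' ≠ 0) (h : dist c c' ^ 2 = (1 / κ + 1 / κ') ^ 2) :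
    inversiveCoords c κ ⬝ᵥ inversiveForm *ᵥ inversiveCoords c' κ' = -1 := by
  rw [inversiveCoords_dotProduct_mulVec]
  rw [dist_eq_norm, norm_sub_sq_real] at h
  field_simp at h ⊢
  linear_combination (-1) * h

theorem inversiveCoords_dotProduct_mulVec_infinity (c : EuclideanSpace ℝ (Fin n)) (κ : ℝ) :
    inversiveCoords c κ ⬝ᵥ inversiveForm *ᵥ inversiveInfinity = κ := by
  simp [inversiveCoords, inversiveForm, inversiveInfinity, dotProduct, Fintype.sum_sum_type,
    mulVec]

theorem inversiveInfinity_dotProduct_mulVec_self :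
    inversiveInfinity ⬝ᵥ inversiveForm *ᵥ (inversiveInfinity : Fin n ⊕ Fin 2 → ℝ) = 0 := by
  simp [inversiveForm, inversiveInfinity, dotProduct, Fintype.sum_sum_type, mulVec]

theorem inversiveMatrix_mul_inversiveForm_mul_transpose {ι : Type*} [Fintype ι] [DecidableEq ι]
    {c : ι → EuclideanSpace ℝ (Fin n)} {κ : ι → ℝ} (hκ : ∀ i, κ i ≠ 0)
    (htangent : ∀ i j, i ≠ j → dist (c i) (c j) ^ 2 = (1 / κ i + 1 / κ j) ^ 2) :
    inversiveMatrix c κ * inversiveForm (n := n) * (inversiveMatrix c κ)ᵀ =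
      (2 - of fun _ _ => 1 : Matrix ι ι ℝ) := by
  ext i j
  simp only [mul_mul_transpose_apply, inversiveMatrix]
  obtain rfl | hij := eq_or_ne i j
  · rw [inversiveCoords_dotProduct_mulVec_self (hκ i)]
    norm_num [ofNat_apply]
  · rw [inversiveCoords_dotProduct_mulVec_of_tangent (hκ i) (hκ j) (htangent i j hij)]
    simp [ofNat_apply, hij]

theorem soddy_gossett_theorem (hn : n ≠ 0) (c : Fin (n + 2) → EuclideanSpace ℝ (Fin n))
    (κ : Fin (n + 2) → ℝ) (hκ : ∀ i, κ i ≠ 0)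
    (htangent : ∀ i j, i ≠ j → dist (c i) (c j) ^ 2 = (1 / κ i + 1 / κ j) ^ 2) :
    (∑ i, κ i) ^ 2 = n * ∑ i, κ i ^ 2 := by
  have hcurv : inversiveMatrix c κ *ᵥ inversiveForm *ᵥ inversiveInfinity = κ := by
    ext i
    exact inversiveCoords_dotProduct_mulVec_infinity (c i) (κ i)
  have hself := dotProduct_mulVec_of_mul_gram_eq_one (inversiveMatrix c κ) inversiveForm _
    (by simp) (by rw [inversiveMatrix_mul_inversiveForm_mul_transpose hκ htangent]
                  exact inv_two_smul_one_sub_allOnes_mul hn) inversiveInfinity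
  rw [hcurv, inversiveInfinity_dotProduct_mulVec_self, smul_mulVec, dotProduct_smul,
    dotProduct_one_sub_smul_allOnes_mulVec, smul_eq_mul] at hself
  field_simp at hself
  linarith

theorem soddy_sphere_theorem_general
    (c : Fin 5 → EuclideanSpace ℝ (Fin 3)) (κ : Fin 5 → ℝ)
    (hκ : ∀ i, κ i ≠ 0)
    (htangent : ∀ i j, i ≠ j → dist (c i) (c j) ^ 2 = (1 / κ i + 1 / κ j) ^ 2) :
    3 * (∑ i, κ i ^ 2) = (∑ i, κ i) ^ 2 := by
  have := soddy_gossett_theorem three_ne_zero c κ hκ htangent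
  push_cast at this
  linarith

/-- Soddy's sphere theorem: five mutually tangent spheres in ℝ³ (with signed
curvatures, a bounding sphere internally tangent to the others having negative
curvature, so that tangency reads `dist = |1/κᵢ + 1/κⱼ|`) satisfy
`3 Σ κᵢ² = (Σ κᵢ)²`. -/
theorem soddy_sphere_theorem
    (c : Fin 5 → EuclideanSpace ℝ (Fin 3)) (κ : Fin 5 → ℝ)
    (hκ : ∀ i, κ i ≠ 0)
    (hcenters : ∀ i j, i ≠ j → c i ≠ c j)
    (htangent : ∀ i j, i ≠ j → dist (c i) (c j) ^ 2 = (1 / κ i + 1 / κ j) ^ 2) :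
    3 * (∑ i, κ i ^ 2) = (∑ i, κ i) ^ 2 :=
  soddy_sphere_theorem_general c κ hκ htangent
end

section
/- For any distinct j,k ∈ {1,...,5}, the generators of the Soddy group satisfy (Mj·Mk)³ = I. -/
/-- The generator `Mⱼ` of the Soddy group: the identity matrix with the `j`-th
row replaced by the row with `-1` in position `j` and `1` elsewhere. -/
def soddyGen (j : Fin 5) : Matrix (Fin 5) (Fin 5) ℤ :=
  fun a b => if a = j then (if b = j then -1 else 1) else (if a = b then 1 else 0)

/-!
`Mⱼ` is the reflection `v ↦ v - fⱼ(v) eⱼ` with coroot `fⱼ(v) = 3 vⱼ - ∑ᵢ vᵢ`. Since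
`fⱼ(eₖ) fₖ(eⱼ) = 1` for `j ≠ k`, the two reflections generate a Coxeter group of type `A₂`, so
their product has order dividing `3`, by the Chebyshev formula for powers of a product of two
reflections.
-/

open Module

theorem Module.reflection_mul_reflection_pow_three {R M : Type*} [CommRing R] [AddCommGroup M]
    [Module R M] {x y : M} {f g : Dual R M} (hf : f x = 2) (hg : g y = 2) (hfg : f y * g x = 1) :
    (reflection hf * reflection hg) ^ 3 = 1 := by
  ext z
  rw [reflection_mul_reflection_pow_apply hf hg 3 z (-1) (by rw [hfg]; norm_num)]
  norm_num [Polynomial.Chebyshev.S_zero, Polynomial.Chebyshev.S_one]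

section SoddyCoroot

variable {R ι : Type*} [CommRing R] [Fintype ι]

/-- `v ↦ v - fⱼ(v) eⱼ` is the reflection in `eⱼ` for the Soddy–Gosset form
`(∑ᵢ vᵢ)² - 3 ∑ᵢ vᵢ²` (in dimension `5`). -/
def soddyCoroot (j : ι) : Dual R (ι → R) :=
  3 • LinearMap.proj j - ∑ i, LinearMap.proj i

theorem soddyCoroot_apply (j : ι) (v : ι → R) : soddyCoroot j v = 3 * v j - ∑ i, v i := by
  simp [soddyCoroot]

theorem soddyCoroot_single_self [DecidableEq ι] (j : ι) :
    soddyCoroot j (Pi.single j (1 : R)) = 2 := by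
  rw [soddyCoroot_apply]
  norm_num

theorem soddyCoroot_single_of_ne [DecidableEq ι] {j k : ι} (h : j ≠ k) :
    soddyCoroot j (Pi.single k (1 : R)) = -1 := by
  simp [soddyCoroot_apply, h]

end SoddyCoroot

theorem toMatrix'_reflection_soddyCoroot (j : Fin 5) :
    LinearMap.toMatrix' (reflection (soddyCoroot_single_self (R := ℤ) j)).toLinearMap =
      soddyGen j := by
  ext a b
  rw [LinearMap.toMatrix'_apply, LinearEquiv.coe_coe, reflection_apply]
  rcases eq_or_ne b j with rfl | hb
  · rw [soddyCoroot_single_self]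
    simp only [soddyGen, Pi.sub_apply, Pi.smul_apply, smul_eq_mul, Pi.single_apply]
    split_ifs <;> grind
  · rw [soddyCoroot_single_of_ne hb.symm]
    simp only [soddyGen, Pi.sub_apply, Pi.smul_apply, smul_eq_mul, Pi.single_apply]
    split_ifs <;> grind

theorem soddyGen_mul_cube (j k : Fin 5) (hjk : j ≠ k) :
    (soddyGen j * soddyGen k) ^ 3 = 1 := by
  let toMatrix : ((Fin 5 → ℤ) ≃ₗ[ℤ] (Fin 5 → ℤ)) →* Matrix (Fin 5) (Fin 5) ℤ :=
    LinearMap.toMatrixAlgEquiv'.toMonoidHom.comp LinearEquiv.automorphismGroup.toLinearMapMonoidHom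
  have h_gen (i : Fin 5) : toMatrix (reflection (soddyCoroot_single_self i)) = soddyGen i :=
    toMatrix'_reflection_soddyCoroot i
  have h_pairing : soddyCoroot j (Pi.single k 1) * soddyCoroot k (Pi.single j (1 : ℤ)) = 1 := by
    rw [soddyCoroot_single_of_ne hjk, soddyCoroot_single_of_ne hjk.symm]
    norm_num
  rw [← h_gen j, ← h_gen k, ← map_mul, ← map_pow,
    reflection_mul_reflection_pow_three _ _ h_pairing, map_one]
end

section
/- For g = [[α,β],[γ,δ]] ∈ SL2(C) and a Hermitian matrix X = [[3A, C+i√3 B],[C−i√3 B, D]] with A,B,C,D real, the matrix X' = g·X·ḡᵗ is again Hermitian of the form [[3A', C'+i√3 B'],[C'−i√3 B', D']] with real A',B',C',D', and F(A',B',C',D') = F(A,B,C,D), where F(A,B,C,D) = 3B² + C² − 3AD. -/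
/-!
Since `det g = 1`, the congruence `X ↦ g X gᴴ` preserves both hermiticity and the determinant.
Every Hermitian `2 × 2` complex matrix has the shape `[[3A, C + i√3 B], [C − i√3 B, D]]` for real
`A, B, C, D`, and its determinant is `3AD − C² − 3B² = −F(A, B, C, D)`.
-/

open Complex Matrix

namespace SpinAction

noncomputable def hermitianOfCoords (A B C D : ℝ) : Matrix (Fin 2) (Fin 2) ℂ :=
  !![(3 * A : ℂ), C + I * Real.sqrt 3 * B; C - I * Real.sqrt 3 * B, D]

def form (A B C D : ℝ) : ℝ := 3 * B ^ 2 + C ^ 2 - 3 * A * D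

theorem isHermitian_hermitianOfCoords (A B C D : ℝ) : (hermitianOfCoords A B C D).IsHermitian := by
  rw [hermitianOfCoords, IsHermitian.ext_iff]
  simp [Fin.forall_fin_two, conj_ofReal, map_ofNat, sub_eq_add_neg]

theorem det_hermitianOfCoords (A B C D : ℝ) :
    (hermitianOfCoords A B C D).det = -(form A B C D : ℂ) := by
  have hsqrt : (Real.sqrt 3 : ℂ) ^ 2 = 3 := by
    rw [← ofReal_pow, Real.sq_sqrt (by norm_num : (0 : ℝ) ≤ 3)]; norm_num
  rw [hermitianOfCoords, det_fin_two_of, form]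
  push_cast
  linear_combination ((Real.sqrt 3 : ℂ) ^ 2 * (B : ℂ) ^ 2) * I_sq - (B : ℂ) ^ 2 * hsqrt

theorem exists_eq_hermitianOfCoords_of_isHermitian {M : Matrix (Fin 2) (Fin 2) ℂ}
    (hM : M.IsHermitian) : ∃ A B C D : ℝ, M = hermitianOfCoords A B C D := by
  have hdiag (i : Fin 2) : ((M i i).re : ℂ) = M i i := conj_eq_iff_re.mp (hM.apply i i)
  have hsqrt : (Real.sqrt 3 : ℂ) ≠ 0 := by exact_mod_cast (Real.sqrt_pos.mpr three_pos).ne'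
  have hoff : (M 0 1).re + I * Real.sqrt 3 * ((M 0 1).im / Real.sqrt 3 : ℝ) = M 0 1 := by
    push_cast
    field_simp
    rw [mul_comm I]
    exact re_add_im _
  refine ⟨(M 0 0).re / 3, (M 0 1).im / Real.sqrt 3, (M 0 1).re, (M 1 1).re, ?_⟩
  refine Matrix.ext ?_
  simp only [Fin.forall_fin_two, hermitianOfCoords, of_apply, cons_val', cons_val_zero, cons_val_one,
    empty_val', cons_val_fin_one]
  refine ⟨⟨?_, hoff.symm⟩, ?_, (hdiag 1).symm⟩
  · push_cast
    rw [mul_div_cancel₀ _ three_ne_zero, hdiag]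
  · rw [← hM.apply 1 0, ← hoff]
    simp [conj_ofReal, sub_eq_add_neg]

theorem det_mul_mul_conjTranspose_of_det_eq_one {R n : Type*} [CommRing R] [StarRing R]
    [Fintype n] [DecidableEq n] {g : Matrix n n R} (hg : g.det = 1) (X : Matrix n n R) :
    (g * X * gᴴ).det = X.det := by
  rw [det_mul, det_mul, det_conjTranspose, hg, star_one, one_mul, mul_one]

end SpinAction

open SpinAction

open Complex Matrix in
/-- The spin action of `SL₂(ℂ)` on Hermitian matrices
`X = [[3A, C+i√3B],[C−i√3B, D]]` preserves the shape of `X` and the form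
`F(A,B,C,D) = 3B² + C² − 3AD`. -/
theorem spin_action_preserves_F (α β γ δ : ℂ) (hdet : α * δ - β * γ = 1)
    (A B C D : ℝ) :
    ∃ A' B' C' D' : ℝ,
      (!![α, β; γ, δ] * !![(3 * A : ℂ), C + I * Real.sqrt 3 * B;
          C - I * Real.sqrt 3 * B, D] * (!![α, β; γ, δ])ᴴ)
        = !![(3 * A' : ℂ), C' + I * Real.sqrt 3 * B';
             C' - I * Real.sqrt 3 * B', D'] ∧
      3 * B'^2 + C'^2 - 3 * A' * D' = 3 * B^2 + C^2 - 3 * A * D := by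
  have hg : (!![α, β; γ, δ] : Matrix (Fin 2) (Fin 2) ℂ).det = 1 := by rw [det_fin_two_of, hdet]
  obtain ⟨A', B', C', D', hX'⟩ := exists_eq_hermitianOfCoords_of_isHermitian
    (isHermitian_mul_mul_conjTranspose !![α, β; γ, δ] (isHermitian_hermitianOfCoords A B C D))
  refine ⟨A', B', C', D', hX', ?_⟩
  have hdetX' := det_mul_mul_conjTranspose_of_det_eq_one hg (hermitianOfCoords A B C D)
  rw [hX', det_hermitianOfCoords, det_hermitianOfCoords, neg_inj] at hdetX'
  exact_mod_cast hdetX'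
end

section
/- Let (κ1,...,κ5) ∈ Z^5 lie on the Soddy cone 3Σκj² = (Σκj)² with negative first entry κ1 < 0 and κ2+κ1, κ3+κ1, κ4+κ1, κ5+κ1 not all zero. Then the quaternary form f of the previous statement (with coefficients in terms of κj) satisfies f(γ1,γ2,δ1,δ2) ≡ (κ1+κ5)(δ1²+δ1δ2+δ2²) (mod 3) for all integers γ1,γ2,δ1,δ2. -/
theorem soddy_quaternary_mod_three_general (κ₁ κ₂ κ₃ κ₄ κ₅ : ℤ)
    (hcone : 3 * (κ₁^2 + κ₂^2 + κ₃^2 + κ₄^2 + κ₅^2)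
      = (κ₁ + κ₂ + κ₃ + κ₄ + κ₅)^2) :
    ∀ γ₁ γ₂ δ₁ δ₂ : ℤ,
      3 * (κ₁ + κ₄) * (γ₁^2 + γ₁*γ₂ + γ₂^2)
        + (κ₁ + κ₅) * (δ₁^2 + δ₁*δ₂ + δ₂^2)
        + (κ₁ - 2*κ₂ + κ₃ + κ₄ + κ₅) * (γ₁*δ₂)
        + (κ₁ + κ₂ - 2*κ₃ + κ₄ + κ₅) * (γ₂*δ₁)
        + (2*κ₁ - κ₂ - κ₃ + 2*κ₄ + 2*κ₅) * (γ₁*δ₁ + γ₂*δ₂)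
      ≡ (κ₁ + κ₅) * (δ₁^2 + δ₁*δ₂ + δ₂^2) [ZMOD 3] := by
  intro γ₁ γ₂ δ₁ δ₂
  have hsum : κ₁ + κ₂ + κ₃ + κ₄ + κ₅ ≡ 0 [ZMOD 3] :=
    Int.modEq_zero_iff_dvd.2 (Int.prime_three.dvd_of_dvd_pow ⟨_, hcone.symm⟩)
  -- Every cross coefficient is the cone sum minus a multiple of 3.
  calc _ = 3 * ((κ₁ + κ₄) * (γ₁^2 + γ₁*γ₂ + γ₂^2) - κ₂ * (γ₁*δ₁ + γ₁*δ₂ + γ₂*δ₂)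
            - κ₃ * (γ₁*δ₁ + γ₂*δ₁ + γ₂*δ₂))
          + (κ₁ + κ₅) * (δ₁^2 + δ₁*δ₂ + δ₂^2)
          + (κ₁ + κ₂ + κ₃ + κ₄ + κ₅) * (γ₁*δ₂ + γ₂*δ₁ + 2 * (γ₁*δ₁ + γ₂*δ₂)) := by ring
    _ ≡ 0 + (κ₁ + κ₅) * (δ₁^2 + δ₁*δ₂ + δ₂^2)
          + 0 * (γ₁*δ₂ + γ₂*δ₁ + 2 * (γ₁*δ₁ + γ₂*δ₂)) [ZMOD 3] := by
      gcongr
      exact Int.modEq_zero_iff_dvd.2 (dvd_mul_right 3 _)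
    _ = _ := by ring

/-- Modulo 3, the quaternary form `f_v` attached to a quintuple on the Soddy
cone reduces to `(κ₁ + κ₅)(δ₁² + δ₁δ₂ + δ₂²)`. -/
theorem soddy_quaternary_mod_three (κ₁ κ₂ κ₃ κ₄ κ₅ : ℤ)
    (hcone : 3 * (κ₁^2 + κ₂^2 + κ₃^2 + κ₄^2 + κ₅^2)
      = (κ₁ + κ₂ + κ₃ + κ₄ + κ₅)^2)
    (hneg : κ₁ < 0)
    (hnz : ¬(κ₂ + κ₁ = 0 ∧ κ₃ + κ₁ = 0 ∧ κ₄ + κ₁ = 0 ∧ κ₅ + κ₁ = 0)) :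
    ∀ γ₁ γ₂ δ₁ δ₂ : ℤ,
      3 * (κ₁ + κ₄) * (γ₁^2 + γ₁*γ₂ + γ₂^2)
        + (κ₁ + κ₅) * (δ₁^2 + δ₁*δ₂ + δ₂^2)
        + (κ₁ - 2*κ₂ + κ₃ + κ₄ + κ₅) * (γ₁*δ₂)
        + (κ₁ + κ₂ - 2*κ₃ + κ₄ + κ₅) * (γ₂*δ₁)
        + (2*κ₁ - κ₂ - κ₃ + 2*κ₄ + 2*κ₅) * (γ₁*δ₁ + γ₂*δ₂)
      ≡ (κ₁ + κ₅) * (δ₁^2 + δ₁*δ₂ + δ₂^2) [ZMOD 3] :=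
  soddy_quaternary_mod_three_general κ₁ κ₂ κ₃ κ₄ κ₅ hcone
end
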